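/- Let n ≥ 3 and (n−1)/2 < p < n/2. There is a constant C > 0, depending only on n and p, such that for every f ∈ L^p(S^{n−1}) (with respect to the surface measure on the unit sphere S^{n−1} ⊂ ℝ^n), the function V(x) = f(x/|x|) |x|^{−2} on ℝ^n \ {0} satisfies ‖V‖_{F^p} ≤ C ‖f‖_{L^p(S^{n−1})}; in particular V ∈ F^p. -/

import Mathlib

noncomputable section

open MeasureTheory Metric Complex
open scoped ENNReal FourierTransform SchwartzMap Classical

/-- The Fourier multiplier operator `m(√−Δ)` on `ℝⁿ`:
`m(√−Δ)h = 𝓕⁻¹(m(|ξ|) 𝓕h(ξ))`. -/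
def mOp (n : ℕ) (m : ℝ → ℂ) (h : EuclideanSpace ℝ (Fin n) → ℂ) :
    EuclideanSpace ℝ (Fin n) → ℂ :=
  fun x => 𝓕⁻ (fun ξ : EuclideanSpace ℝ (Fin n) => m ‖ξ‖ * 𝓕 h ξ) x

/-- The multiplier of `e^{it√−Δ}`, i.e. `ρ ↦ e^{itρ}`. -/
def expMult (t : ℝ) : ℝ → ℂ := fun ρ => Complex.exp (Complex.I * t * ρ)

/-- The multiplier of `cos(t√−Δ)`, i.e. `ρ ↦ cos (tρ)`. -/
def cosMult (t : ℝ) : ℝ → ℂ := fun ρ => ((Real.cos (t * ρ) : ℝ) : ℂ)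

/-- The multiplier of `sin(t√−Δ)/√−Δ`, i.e. `ρ ↦ sin (tρ)/ρ`. -/
def sincMult (t : ℝ) : ℝ → ℂ := fun ρ => ((Real.sin (t * ρ) / ρ : ℝ) : ℂ)

/-- The multiplier of `sin(t√−Δ)`, i.e. `ρ ↦ sin (tρ)`. -/
def sinMult (t : ℝ) : ℝ → ℂ := fun ρ => ((Real.sin (t * ρ) : ℝ) : ℂ)

/-- The multiplier of `(√−Δ)^γ`, i.e. `ρ ↦ ρ^γ`. -/
def powMult (γ : ℝ) : ℝ → ℂ := fun ρ => ((ρ ^ γ : ℝ) : ℂ)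

/-- A function is Schwartz if it agrees pointwise with some Schwartz map. -/
def IsSchwartz {n : ℕ} (h : EuclideanSpace ℝ (Fin n) → ℂ) : Prop :=
  ∃ φ : 𝓢(EuclideanSpace ℝ (Fin n), ℂ), ∀ x, h x = φ x

/-- The Fefferman–Phong norm
`‖V‖_{𝓕^p} = sup_{x, r>0} r^(2-n/p) (∫_{B_r(x)} |V|^p)^(1/p)`. -/
def fpNorm (n : ℕ) (p : ℝ) (V : EuclideanSpace ℝ (Fin n) → ℂ) : ℝ≥0∞ :=
  ⨆ (x : EuclideanSpace ℝ (Fin n)) (r : ℝ) (_ : 0 < r),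
    ENNReal.ofReal (r ^ (2 - n / p)) *
      (∫⁻ y in ball x r, ENNReal.ofReal (‖V y‖ ^ p)) ^ (1 / p)

/-- The weak `L^{n/2}` quasinorm `sup_{λ>0} λ · |{|V| > λ}|^{2/n}`. -/
def wkNorm (n : ℕ) (V : EuclideanSpace ℝ (Fin n) → ℂ) : ℝ≥0∞ :=
  ⨆ (l : ℝ) (_ : 0 < l),
    ENNReal.ofReal l * (volume {x : EuclideanSpace ℝ (Fin n) | l < ‖V x‖}) ^ ((2 : ℝ) / n)

/-- The mixed norm `‖F‖_{L^q_t L^r_x}` for `F : ℝⁿ × ℝ → ℂ`, curried as `F x t`. -/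
def mixedNorm (n : ℕ) (q r : ℝ) (F : EuclideanSpace ℝ (Fin n) → ℝ → ℂ) : ℝ≥0∞ :=
  (∫⁻ t : ℝ, (∫⁻ x : EuclideanSpace ℝ (Fin n), (‖F x t‖₊ : ℝ≥0∞) ^ r) ^ (q / r)) ^ (1 / q)

/-- The weighted norm `‖h‖_{L²_{x,t}(w)}` with weight `w : ℝⁿ → [0,∞]`. -/
def wtNorm (n : ℕ) (w : EuclideanSpace ℝ (Fin n) → ℝ≥0∞)
    (h : EuclideanSpace ℝ (Fin n) → ℝ → ℂ) : ℝ≥0∞ :=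
  (∫⁻ t : ℝ, ∫⁻ x : EuclideanSpace ℝ (Fin n), (‖h x t‖₊ : ℝ≥0∞) ^ (2 : ℝ) * w x) ^ ((1 : ℝ) / 2)

/-- The homogeneous Sobolev norm `‖h‖_{Ḣ^γ} = ‖(√−Δ)^γ h‖_{L²}`. -/
def sobNorm (n : ℕ) (γ : ℝ) (h : EuclideanSpace ℝ (Fin n) → ℂ) : ℝ≥0∞ :=
  eLpNorm (mOp n (powMult γ) h) 2 volume

/-- The point `x/|x|` of the unit sphere, for `x ≠ 0`. -/
def sphMap (n : ℕ) (x : EuclideanSpace ℝ (Fin n)) (hx : x ≠ 0) :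
    Metric.sphere (0 : EuclideanSpace ℝ (Fin n)) 1 :=
  ⟨‖x‖⁻¹ • x, by
    rw [mem_sphere_zero_iff_norm, norm_smul, norm_inv, norm_norm,
      inv_mul_cancel₀ (norm_ne_zero_iff.mpr hx)]⟩

/-! For `y ∈ B_r(x)` the radius `‖y‖` lies in `(‖x‖ - r, ‖x‖ + r)`, so in polar coordinates the
`L^p` mass of `V` on the ball is at most `‖f‖_p^p ∫ s^(n-1-2p) ds` over `(0, ∞) ∩ (‖x‖ - r, ‖x‖ + r)`.
As `0 < n - 2p ≤ 1`, the map `s ↦ s^(n-2p)` is subadditive, which bounds this radial integral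
by `(2r)^(n-2p) / (n-2p)` uniformly in `x`; after taking `p`-th roots, the factor `r^(n/p-2)` is
exactly cancelled by the Fefferman–Phong weight `r^(2-n/p)`. -/

open Set

theorem lintegral_volumeIoiPow {h : ℝ → ℝ≥0∞} (hh : Measurable h) (k : ℕ) :
    ∫⁻ s, h s ∂Measure.volumeIoiPow k = ∫⁻ s in Ioi 0, ENNReal.ofReal (s ^ k) * h s := by
  rw [Measure.volumeIoiPow, lintegral_withDensity_eq_lintegral_mul _
    (measurable_subtype_coe.pow_const _).ennreal_ofReal (g := fun s : Ioi (0 : ℝ) => h s)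
    (hh.comp measurable_subtype_coe)]
  exact lintegral_subtype_comap measurableSet_Ioi fun s => ENNReal.ofReal (s ^ k) * h s

section PolarCoordinates

variable {E : Type*} [NormedAddCommGroup E] [NormedSpace ℝ E] [Nontrivial E]
  [FiniteDimensional ℝ E] [MeasurableSpace E] [BorelSpace E] (μ : Measure E) [μ.IsAddHaarMeasure]

theorem lintegral_eq_lintegral_toSphere_mul_lintegral_Ioi {G : E → ℝ≥0∞}
    {g : sphere (0 : E) 1 → ℝ≥0∞} {h : ℝ → ℝ≥0∞} (hg : Measurable g) (hh : Measurable h)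
    (hG : ∀ y (hy : y ≠ 0), G y = g (homeomorphUnitSphereProd E ⟨y, hy⟩).1 * h ‖y‖) :
    ∫⁻ y, G y ∂μ = (∫⁻ ω, g ω ∂μ.toSphere) *
      ∫⁻ s in Ioi 0, ENNReal.ofReal (s ^ (Module.finrank ℝ E - 1)) * h s := by
  have hgh : Measurable fun z : sphere (0 : E) 1 × Ioi (0 : ℝ) => g z.1 * h z.2 :=
    (hg.comp measurable_fst).mul (hh.comp (measurable_subtype_coe.comp measurable_snd))
  calc ∫⁻ y, G y ∂μ = ∫⁻ y : ({0}ᶜ : Set E), G y ∂(μ.comap (↑)) := by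
        rw [lintegral_subtype_comap (measurableSet_singleton 0).compl, restrict_compl_singleton]
    _ = ∫⁻ y : ({0}ᶜ : Set E), g (homeomorphUnitSphereProd E y).1 *
          h (homeomorphUnitSphereProd E y).2 ∂(μ.comap (↑)) :=
        lintegral_congr fun y => by simpa using hG y y.2
    _ = ∫⁻ z, g z.1 * h z.2 ∂(μ.toSphere.prod (Measure.volumeIoiPow (Module.finrank ℝ E - 1))) :=
        μ.measurePreserving_homeomorphUnitSphereProd.lintegral_comp hgh
    _ = _ := by
        rw [lintegral_prod_mul (g := fun s : Ioi (0 : ℝ) => h s) hg.aemeasurable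
          (hh.comp measurable_subtype_coe).aemeasurable,
          lintegral_volumeIoiPow hh]

end PolarCoordinates

theorem lintegral_Ioc_rpow {a b α : ℝ} (ha : 0 ≤ a) (hab : a ≤ b) (hα : -1 < α) :
    ∫⁻ s in Ioc a b, ENNReal.ofReal (s ^ α) =
      ENNReal.ofReal ((b ^ (α + 1) - a ^ (α + 1)) / (α + 1)) := by
  rw [← ofReal_integral_eq_lintegral_ofReal (intervalIntegral.intervalIntegrable_rpow' hα).1,
    ← intervalIntegral.integral_of_le hab, integral_rpow (Or.inl hα)]
  filter_upwards [ae_restrict_mem measurableSet_Ioc] with s hs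
  exact Real.rpow_nonneg (ha.trans hs.1.le) α

theorem lintegral_Ioi_indicator_Ioo_rpow_le {c r α : ℝ} (hr : 0 ≤ r) (hα : -1 < α)
    (hα0 : α ≤ 0) :
    ∫⁻ s in Ioi 0, (Ioo (c - r) (c + r)).indicator (fun s => ENNReal.ofReal (s ^ α)) s ≤
      ENNReal.ofReal ((2 * r) ^ (α + 1) / (α + 1)) := by
  set a := max (c - r) 0
  have ha : 0 ≤ a := le_max_right _ _
  have hβ : 0 < α + 1 := by linarith
  have hsub : Ioo (c - r) (c + r) ∩ Ioi 0 ⊆ Ioc a (a + 2 * r) := fun s hs =>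
    ⟨max_lt hs.1.1 hs.2, by linarith [hs.1.2, le_max_left (c - r) 0]⟩
  calc ∫⁻ s in Ioi 0, (Ioo (c - r) (c + r)).indicator (fun s => ENNReal.ofReal (s ^ α)) s
      = ∫⁻ s in Ioo (c - r) (c + r) ∩ Ioi 0, ENNReal.ofReal (s ^ α) := by
        rw [lintegral_indicator measurableSet_Ioo, Measure.restrict_restrict measurableSet_Ioo]
    _ ≤ ∫⁻ s in Ioc a (a + 2 * r), ENNReal.ofReal (s ^ α) := lintegral_mono_set hsub
    _ = ENNReal.ofReal (((a + 2 * r) ^ (α + 1) - a ^ (α + 1)) / (α + 1)) :=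
        lintegral_Ioc_rpow ha (by linarith) hα
    _ ≤ ENNReal.ofReal ((2 * r) ^ (α + 1) / (α + 1)) := by
        gcongr
        linarith [Real.rpow_add_le_add_rpow ha (by linarith : (0 : ℝ) ≤ 2 * r) hβ.le
          (by linarith : α + 1 ≤ 1)]

section InverseSquarePotential

variable {n : ℕ}

def inverseSquarePotential (f : sphere (0 : EuclideanSpace ℝ (Fin n)) 1 → ℂ) :
    EuclideanSpace ℝ (Fin n) → ℂ :=
  fun x => if hx : x = 0 then 0 else f (sphMap n x hx) * ((‖x‖ ^ (-2 : ℝ) : ℝ) : ℂ)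

theorem sphMap_eq_homeomorphUnitSphereProd_fst {x : EuclideanSpace ℝ (Fin n)} (hx : x ≠ 0) :
    sphMap n x hx = (homeomorphUnitSphereProd _ ⟨x, hx⟩).1 :=
  Subtype.ext (by simp [sphMap, homeomorphUnitSphereProd])

theorem norm_inverseSquarePotential_rpow (f : sphere (0 : EuclideanSpace ℝ (Fin n)) 1 → ℂ)
    (p : ℝ) {x : EuclideanSpace ℝ (Fin n)} (hx : x ≠ 0) :
    ‖inverseSquarePotential f x‖ ^ p = ‖f (sphMap n x hx)‖ ^ p * ‖x‖ ^ (-2 * p) := by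
  rw [inverseSquarePotential, dif_neg hx, norm_mul, Complex.norm_real, Real.norm_eq_abs,
    abs_of_nonneg (Real.rpow_nonneg (norm_nonneg x) _),
    Real.mul_rpow (norm_nonneg _) (Real.rpow_nonneg (norm_nonneg x) _),
    ← Real.rpow_mul (norm_nonneg x)]

theorem lintegral_ball_inverseSquarePotential_le (hn : 1 ≤ n) {p : ℝ}
    (hp1 : ((n : ℝ) - 1) / 2 ≤ p) (hp2 : p < (n : ℝ) / 2)
    {f : sphere (0 : EuclideanSpace ℝ (Fin n)) 1 → ℂ} (hf : Measurable f)
    (x : EuclideanSpace ℝ (Fin n)) {r : ℝ} (hr : 0 ≤ r) :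
    ∫⁻ y in ball x r, ENNReal.ofReal (‖inverseSquarePotential f y‖ ^ p) ≤
      (∫⁻ ω, ENNReal.ofReal (‖f ω‖ ^ p)
        ∂((volume : Measure (EuclideanSpace ℝ (Fin n))).toSphere)) *
      ENNReal.ofReal ((2 * r) ^ (n - 2 * p) / (n - 2 * p)) := by
  have : Nontrivial (EuclideanSpace ℝ (Fin n)) :=
    Module.finrank_pos_iff.mp (by rw [finrank_euclideanSpace_fin]; omega)
  set shell := Ioo (‖x‖ - r) (‖x‖ + r)
  have hball : ball x r ⊆ {y | ‖y‖ ∈ shell} := fun y hy => by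
    have := (abs_norm_sub_norm_le y x).trans_lt (mem_ball_iff_norm.mp hy)
    rw [abs_lt] at this
    constructor <;> linarith
  have hshell : MeasurableSet {y : EuclideanSpace ℝ (Fin n) | ‖y‖ ∈ shell} :=
    measurableSet_Ioo.preimage measurable_norm
  have hpolar := lintegral_eq_lintegral_toSphere_mul_lintegral_Ioi volume
    (G := {y | ‖y‖ ∈ shell}.indicator fun y => ENNReal.ofReal (‖inverseSquarePotential f y‖ ^ p))
    (g := fun ω => ENNReal.ofReal (‖f ω‖ ^ p))
    (h := shell.indicator fun s => ENNReal.ofReal (s ^ (-2 * p)))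
    (by fun_prop) ((by fun_prop : Measurable fun s : ℝ => ENNReal.ofReal (s ^ (-2 * p))).indicator
      measurableSet_Ioo) fun y hy => by
      by_cases hy' : ‖y‖ ∈ shell
      · rw [indicator_of_mem (show y ∈ {y | ‖y‖ ∈ shell} from hy'), indicator_of_mem hy',
          norm_inverseSquarePotential_rpow f p hy, ENNReal.ofReal_mul (by positivity),
          sphMap_eq_homeomorphUnitSphereProd_fst]
      · rw [indicator_of_notMem (show y ∉ {y | ‖y‖ ∈ shell} from hy'), indicator_of_notMem hy',
          mul_zero]
  have hradial : ∀ s ∈ Ioi (0 : ℝ),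
      ENNReal.ofReal (s ^ (Module.finrank ℝ (EuclideanSpace ℝ (Fin n)) - 1)) *
        shell.indicator (fun s => ENNReal.ofReal (s ^ (-2 * p))) s =
      shell.indicator (fun s => ENNReal.ofReal (s ^ ((n : ℝ) - 1 - 2 * p))) s := by
    intro s (hs : 0 < s)
    by_cases hs' : s ∈ shell
    · rw [indicator_of_mem hs', indicator_of_mem hs', finrank_euclideanSpace_fin,
        ← ENNReal.ofReal_mul (by positivity), ← Real.rpow_natCast, ← Real.rpow_add hs,
        Nat.cast_sub hn, Nat.cast_one]
      ring_nf
    · rw [indicator_of_notMem hs', indicator_of_notMem hs', mul_zero]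
  calc ∫⁻ y in ball x r, ENNReal.ofReal (‖inverseSquarePotential f y‖ ^ p)
      ≤ ∫⁻ y in {y | ‖y‖ ∈ shell}, ENNReal.ofReal (‖inverseSquarePotential f y‖ ^ p) :=
        lintegral_mono_set hball
    _ = _ := by rw [← lintegral_indicator hshell, hpolar,
          setLIntegral_congr_fun measurableSet_Ioi hradial]
    _ ≤ _ := by
        gcongr
        rw [show (n : ℝ) - 2 * p = n - 1 - 2 * p + 1 by ring]
        exact lintegral_Ioi_indicator_Ioo_rpow_le hr (by linarith) (by linarith)

end InverseSquarePotential

/-- For `(n-1)/2 < p < n/2`, the potential `V(x) = f(x/|x|)|x|^{-2}` with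
`f ∈ L^p(S^{n-1})` belongs to the Fefferman–Phong class `𝓕^p`, with norm bound. -/
theorem angular_inverse_square_fp (n : ℕ) (hn : 3 ≤ n) (p : ℝ)
    (hp1 : ((n : ℝ) - 1) / 2 < p) (hp2 : p < (n : ℝ) / 2) :
    ∃ C > (0 : ℝ), ∀ f : Metric.sphere (0 : EuclideanSpace ℝ (Fin n)) 1 → ℂ,
      Measurable f →
      fpNorm n p (fun x => if hx : x = 0 then 0 else
          f (sphMap n x hx) * ((‖x‖ ^ (-2 : ℝ) : ℝ) : ℂ)) ≤
        ENNReal.ofReal C *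
          (∫⁻ ω, ENNReal.ofReal (‖f ω‖ ^ p)
            ∂((volume : Measure (EuclideanSpace ℝ (Fin n))).toSphere)) ^ (1 / p) := by
  have hp : 0 < p := by
    have : (3 : ℝ) ≤ n := by exact_mod_cast hn
    linarith
  set β := (n : ℝ) - 2 * p
  have hβ : 0 < β := by linarith
  refine ⟨(2 ^ β / β) ^ (1 / p), by positivity, fun f hf => ?_⟩
  change fpNorm n p (inverseSquarePotential f) ≤ _
  refine iSup₂_le fun x r => iSup_le fun hr => ?_
  have hscale : r ^ (2 - n / p) * ((2 * r) ^ β / β) ^ (1 / p) = (2 ^ β / β) ^ (1 / p) := by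
    rw [Real.mul_rpow (by norm_num) hr.le, mul_div_right_comm,
      Real.mul_rpow (by positivity) (by positivity), ← Real.rpow_mul hr.le, ← mul_assoc,
      mul_comm (r ^ _), mul_assoc, ← Real.rpow_add hr,
      show 2 - n / p + β * (1 / p) = 0 by field_simp; ring, Real.rpow_zero, mul_one]
  calc ENNReal.ofReal (r ^ (2 - n / p)) *
        (∫⁻ y in ball x r, ENNReal.ofReal (‖inverseSquarePotential f y‖ ^ p)) ^ (1 / p)
      ≤ ENNReal.ofReal (r ^ (2 - n / p)) *
        ((∫⁻ ω, ENNReal.ofReal (‖f ω‖ ^ p) ∂(volume.toSphere)) *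
          ENNReal.ofReal ((2 * r) ^ β / β)) ^ (1 / p) := by
        gcongr
        exact lintegral_ball_inverseSquarePotential_le (by omega) hp1.le hp2 hf x hr.le
    _ = _ := by
        rw [ENNReal.mul_rpow_of_nonneg _ _ (by positivity),
          ENNReal.ofReal_rpow_of_nonneg (by positivity) (by positivity), mul_left_comm,
          ← ENNReal.ofReal_mul (by positivity), hscale, mul_comm]

end
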